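/- For z ≥ 0, (2Φ(z) - 1)² ≤ 1 - e^{-2z²/π}, where Φ is the standard normal CDF. -/

import Mathlib

/-!
By Fubini, `(2 Φ(z) - 1)²` is the standard Gaussian mass of the square `S = [-z, z]²`. The disc
`D` of radius `r = 2z/√π` has the same area `4z²`. The radial Gaussian density is at least its
value `c` on the circle `∂D` inside `D` and at most `c` outside, so, since `S \ D` and `D \ S`
have equal area, `∫_S ≤ ∫_{S ∩ D} + c |S \ D| = ∫_{S ∩ D} + c |D \ S| ≤ ∫_D`. In polar
coordinates the Gaussian mass of `D` is `1 - e^{-r²/2} = 1 - e^{-2z²/π}`.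
-/

open Real Set Filter Topology

noncomputable def phi (y : ℝ) : ℝ := (Real.sqrt (2 * Real.pi))⁻¹ * Real.exp (-y ^ 2 / 2)

noncomputable def Phi (x : ℝ) : ℝ := ∫ y in Set.Iic x, phi y

noncomputable def PhiInv (a : ℝ) : ℝ := Function.invFun Phi a

open MeasureTheory ProbabilityTheory
open scoped ENNReal

theorem setIntegral_le_setIntegral_of_measure_eq {α : Type*} [MeasurableSpace α]
    {μ : Measure α} {f : α → ℝ} {s t : Set α} (c : ℝ) (hs : MeasurableSet s)
    (ht : MeasurableSet t) (hfs : IntegrableOn f s μ) (hft : IntegrableOn f t μ)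
    (hμ : μ s = μ t) (ht_fin : μ t ≠ ∞) (hle : ∀ x ∈ s \ t, f x ≤ c)
    (hge : ∀ x ∈ t \ s, c ≤ f x) : ∫ x in s, f x ∂μ ≤ ∫ x in t, f x ∂μ := by
  have hs_fin : μ s ≠ ∞ := hμ ▸ ht_fin
  have h_sdiff : μ (s \ t) = μ (t \ s) := measure_sdiff_symm hs.nullMeasurableSet
    ht.nullMeasurableSet hμ (ne_top_of_le_ne_top ht_fin (measure_mono inter_subset_right))
  calc ∫ x in s, f x ∂μ = ∫ x in s ∩ t, f x ∂μ + ∫ x in s \ t, f x ∂μ :=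
        (integral_inter_add_sdiff ht hfs).symm
    _ ≤ ∫ x in s ∩ t, f x ∂μ + ∫ _ in s \ t, c ∂μ :=
        add_le_add le_rfl (setIntegral_mono_on (hfs.mono_set sdiff_subset)
          (integrableOn_const (measure_ne_top_of_subset sdiff_subset hs_fin)) (hs.diff ht) hle)
    _ = ∫ x in t ∩ s, f x ∂μ + ∫ _ in t \ s, c ∂μ := by
        rw [inter_comm, setIntegral_const, setIntegral_const, measureReal_def,
          measureReal_def, h_sdiff]
    _ ≤ ∫ x in t ∩ s, f x ∂μ + ∫ x in t \ s, f x ∂μ :=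
        add_le_add le_rfl (setIntegral_mono_on
          (integrableOn_const (measure_ne_top_of_subset sdiff_subset ht_fin))
          (hft.mono_set sdiff_subset) (ht.diff hs) hge)
    _ = ∫ x in t, f x ∂μ := integral_inter_add_sdiff hs hft

lemma phi_eq_gaussianPDFReal : phi = gaussianPDFReal 0 1 := by
  ext y
  simp [phi, gaussianPDFReal]

lemma integrable_phi : Integrable phi := by
  rw [phi_eq_gaussianPDFReal]
  exact integrable_gaussianPDFReal 0 1

lemma integral_phi : ∫ y, phi y = 1 := by
  rw [phi_eq_gaussianPDFReal]
  exact integral_gaussianPDFReal_eq_one 0 one_ne_zero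

lemma phi_neg (y : ℝ) : phi (-y) = phi y := by
  simp [phi]

lemma Phi_neg (z : ℝ) : Phi (-z) = 1 - Phi z := by
  have h_tail : Phi (-z) = ∫ y in Ioi z, phi y := by
    rw [Phi, ← neg_neg z, ← integral_comp_neg_Iic, neg_neg]
    simp only [phi_neg]
  rw [h_tail, ← integral_phi, Phi, ← intervalIntegral.integral_Iic_add_Ioi
    integrable_phi.integrableOn integrable_phi.integrableOn]
  ring

lemma two_mul_Phi_sub_one {z : ℝ} (hz : 0 ≤ z) :
    2 * Phi z - 1 = ∫ y in Icc (-z) z, phi y := by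
  rw [integral_Icc_eq_integral_Ioc, ← intervalIntegral.integral_of_le (by linarith),
    ← intervalIntegral.integral_Iic_sub_Iic integrable_phi.integrableOn
      integrable_phi.integrableOn, ← Phi, ← Phi, Phi_neg]
  ring

lemma phi_mul_phi (x y : ℝ) : phi x * phi y = (2 * π)⁻¹ * exp (-(x ^ 2 + y ^ 2) / 2) := by
  have h_sqrt : √(2 * π) * √(2 * π) = 2 * π := mul_self_sqrt (by positivity)
  rw [phi, phi, mul_mul_mul_comm, ← mul_inv, h_sqrt, ← exp_add]
  ring_nf

lemma phi_mul_phi_le_phi_mul_phi {x y u v : ℝ} (h : u ^ 2 + v ^ 2 ≤ x ^ 2 + y ^ 2) :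
    phi x * phi y ≤ phi u * phi v := by
  rw [phi_mul_phi, phi_mul_phi]
  gcongr

def disc (r : ℝ) : Set (ℝ × ℝ) := {p | p.1 ^ 2 + p.2 ^ 2 ≤ r ^ 2}

lemma measurableSet_disc (r : ℝ) : MeasurableSet (disc r) :=
  measurableSet_le (by fun_prop) (by fun_prop)

lemma disc_subset_closedBall {r : ℝ} (hr : 0 ≤ r) : disc r ⊆ Metric.closedBall 0 r := by
  intro p hp
  rw [mem_closedBall_zero_iff, Prod.norm_def, Real.norm_eq_abs, Real.norm_eq_abs]
  exact max_le (abs_le_of_sq_le_sq (by nlinarith [hp.out]) hr)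
    (abs_le_of_sq_le_sq (by nlinarith [hp.out]) hr)

lemma sq_add_sq_polarCoord_symm (p : ℝ × ℝ) :
    (polarCoord.symm p).1 ^ 2 + (polarCoord.symm p).2 ^ 2 = p.1 ^ 2 := by
  simp only [polarCoord_symm_apply]
  linear_combination p.1 ^ 2 * sin_sq_add_cos_sq p.2

lemma integral_disc_radial (f : ℝ → ℝ) {r : ℝ} (hr : 0 ≤ r) :
    ∫ p in disc r, f (p.1 ^ 2 + p.2 ^ 2) = 2 * π * ∫ ρ in 0..r, ρ * f (ρ ^ 2) := by
  set F : ℝ × ℝ → ℝ := fun p => f (p.1 ^ 2 + p.2 ^ 2)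
  set g : ℝ → ℝ := fun ρ => ρ * f (ρ ^ 2)
  have h_polar : ∀ p ∈ polarCoord.target,
      p.1 • (disc r).indicator F (polarCoord.symm p) = (Iic r).indicator g p.1 * 1 := by
    rintro p ⟨hp : 0 < p.1, -⟩
    have h_mem : polarCoord.symm p ∈ disc r ↔ p.1 ∈ Iic r := by
      rw [disc, mem_ofPred_eq, sq_add_sq_polarCoord_symm,
        pow_le_pow_iff_left₀ hp.le hr two_ne_zero, mem_Iic]
    by_cases h : p.1 ∈ Iic r
    · rw [indicator_of_mem (h_mem.mpr h), indicator_of_mem h]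
      simp only [F, g, smul_eq_mul, mul_one, sq_add_sq_polarCoord_symm]
    · rw [indicator_of_notMem (mt h_mem.mp h), indicator_of_notMem h, smul_zero, zero_mul]
  calc ∫ p in disc r, F p = ∫ p, (disc r).indicator F p :=
        (integral_indicator (measurableSet_disc r)).symm
    _ = ∫ p in polarCoord.target, p.1 • (disc r).indicator F (polarCoord.symm p) :=
        (integral_comp_polarCoord_symm _).symm
    _ = ∫ p in Ioi 0 ×ˢ Ioo (-π) π, (Iic r).indicator g p.1 * 1 :=
        setIntegral_congr_fun polarCoord.open_target.measurableSet h_polar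
    _ = (∫ ρ in Ioi 0, (Iic r).indicator g ρ) * ∫ _ in Ioo (-π) π, (1 : ℝ) := by
        rw [Measure.volume_eq_prod]
        exact setIntegral_prod_mul _ (fun _ => (1 : ℝ)) _ _
    _ = 2 * π * ∫ ρ in 0..r, g ρ := by
        rw [setIntegral_indicator measurableSet_Iic, Ioi_inter_Iic,
          ← intervalIntegral.integral_of_le hr, setIntegral_const, Real.volume_real_Ioo_of_le
          (by linarith [pi_pos])]
        ring

lemma volume_disc {r : ℝ} (hr : 0 ≤ r) : volume (disc r) = ENNReal.ofReal (π * r ^ 2) := by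
  have h_fin : volume (disc r) ≠ ∞ :=
    measure_ne_top_of_subset (disc_subset_closedBall hr) measure_closedBall_lt_top.ne
  have h_real : volume.real (disc r) = π * r ^ 2 := by
    have h := integral_disc_radial (fun _ => 1) hr
    simp only [setIntegral_const, smul_eq_mul, mul_one, integral_id] at h
    rw [h]
    ring
  rw [← ofReal_measureReal h_fin, h_real]

lemma integral_mul_exp_neg_sq_div_two (r : ℝ) :
    ∫ ρ in 0..r, ρ * exp (-ρ ^ 2 / 2) = 1 - exp (-r ^ 2 / 2) := by
  have h_deriv : ∀ ρ ∈ uIcc 0 r,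
      HasDerivAt (fun ρ => -exp (-ρ ^ 2 / 2)) (ρ * exp (-ρ ^ 2 / 2)) ρ := by
    intro ρ _
    have h_exponent : HasDerivAt (fun ρ : ℝ => -ρ ^ 2 / 2) (-ρ) ρ :=
      ((hasDerivAt_pow 2 ρ).neg.div_const 2).congr_deriv (by ring)
    exact h_exponent.exp.neg.congr_deriv (by ring)
  rw [intervalIntegral.integral_eq_sub_of_hasDerivAt h_deriv
    (by apply Continuous.intervalIntegrable; fun_prop)]
  simp only [ne_eq, OfNat.ofNat_ne_zero, not_false_eq_true, zero_pow, neg_zero, zero_div,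
    exp_zero, sub_neg_eq_add]
  ring

lemma integral_disc_phi_mul_phi {r : ℝ} (hr : 0 ≤ r) :
    ∫ p in disc r, phi p.1 * phi p.2 = 1 - exp (-r ^ 2 / 2) := by
  simp_rw [phi_mul_phi]
  rw [integral_disc_radial (fun t => (2 * π)⁻¹ * exp (-t / 2)) hr]
  simp only [mul_left_comm _ (2 * π)⁻¹, intervalIntegral.integral_const_mul,
    integral_mul_exp_neg_sq_div_two]
  field_simp

lemma integrable_phi_mul_phi : Integrable (fun p : ℝ × ℝ => phi p.1 * phi p.2) :=
  integrable_phi.mul_prod integrable_phi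

lemma setIntegral_phi_mul_phi_le_disc {S : Set (ℝ × ℝ)} (hS : MeasurableSet S) {r : ℝ}
    (hr : 0 ≤ r) (h_volume : volume S = volume (disc r)) :
    ∫ p in S, phi p.1 * phi p.2 ≤ ∫ p in disc r, phi p.1 * phi p.2 := by
  -- `phi r * phi 0` is the value of the density on the boundary circle.
  refine setIntegral_le_setIntegral_of_measure_eq (phi r * phi 0) hS (measurableSet_disc r)
    integrable_phi_mul_phi.integrableOn integrable_phi_mul_phi.integrableOn h_volume
    (by rw [volume_disc hr]; exact ENNReal.ofReal_ne_top)
    (fun p hp => phi_mul_phi_le_phi_mul_phi ?_) (fun p hp => phi_mul_phi_le_phi_mul_phi ?_)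
  · have h_outside : r ^ 2 < p.1 ^ 2 + p.2 ^ 2 := not_le.mp hp.2
    linarith
  · have h_inside : p.1 ^ 2 + p.2 ^ 2 ≤ r ^ 2 := hp.1
    linarith

lemma volume_square {z : ℝ} (hz : 0 ≤ z) :
    volume (Icc (-z) z ×ˢ Icc (-z) z) = ENNReal.ofReal (4 * z ^ 2) := by
  rw [Measure.volume_eq_prod, Measure.prod_prod, Real.volume_Icc,
    ← ENNReal.ofReal_mul (by linarith)]
  ring_nf

lemma setIntegral_square_phi_mul_phi {z : ℝ} (hz : 0 ≤ z) :
    ∫ p in Icc (-z) z ×ˢ Icc (-z) z, phi p.1 * phi p.2 = (2 * Phi z - 1) ^ 2 := by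
  rw [two_mul_Phi_sub_one hz, sq, Measure.volume_eq_prod, setIntegral_prod_mul]

theorem gaussian_square_disc (z : ℝ) (hz : 0 ≤ z) :
    (2 * Phi z - 1) ^ 2 ≤ 1 - Real.exp (-2 * z ^ 2 / Real.pi) := by
  set r := 2 * z / √π
  have h_area : π * r ^ 2 = 4 * z ^ 2 := by
    rw [div_pow, sq_sqrt pi_pos.le]
    field_simp
    ring
  calc (2 * Phi z - 1) ^ 2 = ∫ p in Icc (-z) z ×ˢ Icc (-z) z, phi p.1 * phi p.2 :=
        (setIntegral_square_phi_mul_phi hz).symm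
    _ ≤ ∫ p in disc r, phi p.1 * phi p.2 :=
        setIntegral_phi_mul_phi_le_disc (measurableSet_Icc.prod measurableSet_Icc)
          (by positivity) (by rw [volume_square hz, volume_disc (by positivity), h_area])
    _ = 1 - exp (-r ^ 2 / 2) := integral_disc_phi_mul_phi (by positivity)
    _ = 1 - exp (-2 * z ^ 2 / π) := by
        rw [show r ^ 2 = 4 * z ^ 2 / π by rw [← h_area]; field_simp]
        ring_nf
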